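/- (Lemma 2, bounded path loss model.) Let M ≥ 2 be an integer, let λ, ρ, D > 0 and α > 2. On a probability space, let N be Poisson distributed with mean λπD², and let (R_i, E_i, S_i)_{i∈ℕ} be i.i.d. random triples, independent of N, such that for each i the coordinates R_i, E_i, S_i are mutually independent, R_i has cumulative distribution function r ↦ (r/D)² on [0, D], E_i has the exponential distribution with rate 1, and S_i has the Gamma distribution with shape M−1 and rate 1. Define γ_i = E_i / ( (1 + R_i^α)/ρ + S_i ). Then for every x > 0, P( {ω : for all i < N(ω), γ_i(ω) ≤ x} ) = exp( −(2λπ/α) e^{−x/ρ} (x+1)^{1−M} (ρ/x)^{2/α} γ_inc(2/α, x D^α / ρ) ), where γ_inc(s, X) := ∫_0^X u^{s−1} e^{−u} du denotes the lower incomplete gamma function. -/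

import Mathlib

/-!
Given the number `N = n` of users, the users are i.i.d. and independent of `N`, so the
probability that every beam SINR is at most `x` is the Poisson generating function
`E[(1 - q)^N] = exp(-λπD² q)` with `q = P(γ > x)`. As the signal power is `Exp(1)` and
independent of the noise-plus-interference term `T = (1 + R^α)/ρ + S`, we get
`q = E[exp(-x T)]`, which factorises by independence into `e^{-x/ρ}`, the Laplace transform
`(1 + x)^{1-M}` of `Gamma(M-1, 1)`, and `E[exp(-(x/ρ) R^α)]`; the substitution `u = (x/ρ) r^α`
against the radial density `2r/D²` turns the last factor into
`(2/(αD²)) (ρ/x)^{2/α} γ_inc(2/α, x D^α/ρ)`.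
-/

open MeasureTheory ProbabilityTheory Real Set

lemma integral_Ioc_exp_neg_mul_rpow_mul_self {c D α : ℝ} (hc : 0 < c) (hD : 0 ≤ D)
    (hα : 0 < α) :
    ∫ r in Ioc 0 D, exp (-(c * r ^ α)) * r
      = α⁻¹ * c ^ (-(2 / α)) * ∫ u in 0..c * D ^ α, u ^ (2 / α - 1) * exp (-u) := by
  set f : ℝ → ℝ := fun r ↦ c * r ^ α
  have hmono : StrictMonoOn f (Icc 0 D) := fun r hr s _ hrs ↦
    mul_lt_mul_of_pos_left (rpow_lt_rpow hr.1 hrs hα) hc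
  have himage : f '' Ioc 0 D = Ioc 0 (c * D ^ α) := by
    rw [ContinuousOn.image_Ioc_of_strictMonoOn hD
      (show ContinuousOn f _ from (continuous_rpow_const hα.le).continuousOn.const_smul c) hmono]
    simp [f, zero_rpow hα.ne']
  have hderiv : ∀ r ∈ Ioc 0 D, HasDerivWithinAt f (c * (α * r ^ (α - 1))) (Ioc 0 D) r :=
    fun r hr ↦ ((hasDerivAt_rpow_const (Or.inl hr.1.ne')).const_mul c).hasDerivWithinAt
  have hjac : ∀ r ∈ Ioc 0 D, |c * (α * r ^ (α - 1))| • (f r ^ (2 / α - 1) * exp (-f r))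
      = α * c ^ (2 / α) * (exp (-(c * r ^ α)) * r) := by
    intro r hr
    have hr0 : 0 < r := hr.1
    have hr1 : r ^ (α - 1) * r ^ (2 - α) = r := by rw [← rpow_add hr0]; norm_num
    rw [abs_of_pos (by positivity), smul_eq_mul, mul_rpow hc.le (by positivity),
      ← rpow_mul hr0.le, show α * (2 / α - 1) = 2 - α by field_simp, rpow_sub_one hc.ne']
    field_simp
    linear_combination exp (-f r) * hr1
  have hcov := integral_image_eq_integral_abs_deriv_smul measurableSet_Ioc hderiv
    (hmono.injOn.mono Ioc_subset_Icc_self) fun u ↦ u ^ (2 / α - 1) * exp (-u)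
  rw [himage, setIntegral_congr_fun measurableSet_Ioc hjac, integral_const_mul,
    ← intervalIntegral.integral_of_le (by positivity)] at hcov
  rw [hcov, rpow_neg hc.le]
  field_simp

/-- The law of the distance to the centre of a uniformly distributed point of the disc of
radius `D`. -/
noncomputable def diskRadiusMeasure (D : ℝ) : Measure ℝ :=
  (volume.restrict (Ioc 0 D)).withDensity fun r ↦ ENNReal.ofReal (2 * r / D ^ 2)

lemma setLIntegral_Ioc_two_mul_div_sq (D : ℝ) {b : ℝ} (hb : 0 ≤ b) :
    ∫⁻ r in Ioc 0 b, ENNReal.ofReal (2 * r / D ^ 2) = ENNReal.ofReal (b ^ 2 / D ^ 2) := by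
  rw [← ofReal_integral_eq_lintegral_ofReal (by fun_prop : Continuous _).integrableOn_Ioc
    ((ae_restrict_iff' measurableSet_Ioc).2 (ae_of_all _ fun r hr ↦ by have := hr.1; positivity)),
    ← intervalIntegral.integral_of_le hb, intervalIntegral.integral_div,
    intervalIntegral.integral_const_mul, integral_id]
  ring_nf

lemma diskRadiusMeasure_Iic {D a : ℝ} (hD : 0 ≤ D) (ha : 0 ≤ a) :
    diskRadiusMeasure D (Iic a) = ENNReal.ofReal (min D a ^ 2 / D ^ 2) := by
  rw [diskRadiusMeasure, withDensity_apply _ measurableSet_Iic,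
    Measure.restrict_restrict measurableSet_Iic, inter_comm, Ioc_inter_Iic]
  exact setLIntegral_Ioc_two_mul_div_sq D (le_min hD ha)

lemma ae_mem_Ioc_diskRadiusMeasure (D : ℝ) : ∀ᵐ r ∂diskRadiusMeasure D, r ∈ Ioc 0 D :=
  (withDensity_absolutelyContinuous _ _).ae_le (ae_restrict_mem measurableSet_Ioc)

lemma isProbabilityMeasure_diskRadiusMeasure {D : ℝ} (hD : 0 < D) :
    IsProbabilityMeasure (diskRadiusMeasure D) := by
  constructor
  rw [diskRadiusMeasure, withDensity_apply _ MeasurableSet.univ, Measure.restrict_univ,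
    setLIntegral_Ioc_two_mul_div_sq D hD.le, div_self (by positivity), ENNReal.ofReal_one]

lemma map_eq_diskRadiusMeasure {Ω : Type*} {mΩ : MeasurableSpace Ω} {P : Measure Ω}
    [IsProbabilityMeasure P] {D : ℝ} (hD : 0 < D) {R : Ω → ℝ} (hR : Measurable R)
    (hcdf : ∀ r ∈ Icc 0 D, (P {ω | R ω ≤ r}).toReal = (r / D) ^ 2) :
    P.map R = diskRadiusMeasure D := by
  have := isProbabilityMeasure_diskRadiusMeasure hD
  have := Measure.isProbabilityMeasure_map (μ := P) hR.aemeasurable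
  have hP : ∀ r ∈ Icc 0 D, P (R ⁻¹' Iic r) = ENNReal.ofReal ((r / D) ^ 2) := fun r hr ↦ by
    rw [← hcdf r hr, ENNReal.ofReal_toReal (measure_ne_top P _)]; rfl
  refine Measure.ext_of_Iic _ _ fun a ↦ ?_
  rw [Measure.map_apply hR measurableSet_Iic]
  rcases lt_or_ge a 0 with ha | ha
  · have hdisk : diskRadiusMeasure D (Iic a) = 0 := by
      refine measure_mono_null ?_ (ae_mem_Ioc_diskRadiusMeasure D)
      intro r (hr : r ≤ a) (hmem : r ∈ Ioc 0 D)
      linarith [hmem.1]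
    have hR0 : P (R ⁻¹' Iic 0) = 0 := by simpa using hP 0 ⟨le_rfl, hD.le⟩
    rw [hdisk]
    exact measure_mono_null (preimage_mono (Iic_subset_Iic.2 ha.le)) hR0
  rw [diskRadiusMeasure_Iic hD.le ha]
  rcases le_or_gt a D with haD | haD
  · rw [hP a ⟨ha, haD⟩, min_eq_right haD, div_pow]
  · have hR1 : P (R ⁻¹' Iic D) = 1 := by simpa [hD.ne'] using hP D ⟨hD.le, le_rfl⟩
    rw [min_eq_left haD.le, div_self (by positivity), ENNReal.ofReal_one]
    exact le_antisymm prob_le_one (hR1 ▸ measure_mono (preimage_mono (Iic_subset_Iic.2 haD.le)))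

lemma lintegral_exp_neg_mul_rpow_diskRadiusMeasure {c D α : ℝ} (hc : 0 < c) (hD : 0 ≤ D)
    (hα : 0 < α) :
    ∫⁻ r, ENNReal.ofReal (exp (-(c * r ^ α))) ∂diskRadiusMeasure D
      = ENNReal.ofReal (2 / (α * D ^ 2) * c ^ (-(2 / α)) *
          ∫ u in 0..c * D ^ α, u ^ (2 / α - 1) * exp (-u)) := by
  set g : ℝ → ℝ := fun r ↦ 2 / D ^ 2 * (exp (-(c * r ^ α)) * r)
  have hg : IntegrableOn g (Ioc 0 D) :=
    (by fun_prop (disch := exact hα.le) : Continuous g).integrableOn_Ioc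
  have hg0 : 0 ≤ᵐ[volume.restrict (Ioc 0 D)] g :=
    (ae_restrict_iff' measurableSet_Ioc).2 (ae_of_all _ fun r hr ↦ by have := hr.1; positivity)
  have hdens : ∀ r ∈ Ioc 0 D, ENNReal.ofReal (2 * r / D ^ 2)
      * ENNReal.ofReal (exp (-(c * r ^ α))) = ENNReal.ofReal (g r) := fun r hr ↦ by
    have hr0 : 0 < r := hr.1
    rw [← ENNReal.ofReal_mul (by positivity)]
    congr 1; ring
  rw [diskRadiusMeasure, lintegral_withDensity_eq_lintegral_mul _ (by fun_prop) (by fun_prop)]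
  simp_rw [Pi.mul_apply]
  rw [setLIntegral_congr_fun measurableSet_Ioc hdens,
    ← ofReal_integral_eq_lintegral_ofReal hg hg0, integral_const_mul,
    integral_Ioc_exp_neg_mul_rpow_mul_self hc hD hα]
  congr 1
  field_simp

lemma expMeasure_Ioi {r t : ℝ} (hr : 0 < r) (ht : 0 ≤ t) :
    expMeasure r (Ioi t) = ENNReal.ofReal (exp (-(r * t))) := by
  have := isProbabilityMeasure_expMeasure hr
  rw [← compl_Iic, prob_compl_eq_one_sub measurableSet_Iic, ← ofReal_cdf,
    cdf_expMeasure_eq hr, if_pos ht, ← ENNReal.ofReal_one,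
    ← ENNReal.ofReal_sub _ (sub_nonneg.2 (exp_le_one_iff.2 (by nlinarith))), sub_sub_cancel]

lemma measurable_gammaPDF (a r : ℝ) : Measurable (gammaPDF a r) :=
  (measurable_gammaPDFReal a r).ennreal_ofReal

lemma ae_nonneg_gammaMeasure (a r : ℝ) : ∀ᵐ s ∂gammaMeasure a r, 0 ≤ s := by
  simp only [ae_iff, not_le]
  change gammaMeasure a r (Iio 0) = 0
  rw [gammaMeasure, withDensity_apply _ measurableSet_Iio]
  exact lintegral_gammaPDF_of_nonpos le_rfl

lemma lintegral_exp_neg_mul_gammaMeasure {a r x : ℝ} (ha : 0 < a) (hr : 0 < r)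
    (hx : 0 < r + x) :
    ∫⁻ s, ENNReal.ofReal (exp (-(x * s))) ∂gammaMeasure a r
      = ENNReal.ofReal ((r / (r + x)) ^ a) := by
  have hpdf : ∀ s, gammaPDF a r s * ENNReal.ofReal (exp (-(x * s)))
      = ENNReal.ofReal ((r / (r + x)) ^ a) * gammaPDF a (r + x) s := by
    intro s
    rcases lt_or_ge s 0 with hs | hs
    · simp [gammaPDF_of_neg hs]
    rw [gammaPDF_of_nonneg hs, gammaPDF_of_nonneg hs, ← ENNReal.ofReal_mul (by positivity),
      ← ENNReal.ofReal_mul (by positivity), div_rpow hr.le hx.le]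
    have hexp : exp (-(r * s)) * exp (-(x * s)) = exp (-((r + x) * s)) := by
      rw [← exp_add]; ring_nf
    rw [mul_assoc _ (exp _), hexp]
    field_simp
  rw [gammaMeasure, lintegral_withDensity_eq_lintegral_mul _ (measurable_gammaPDF a r)
    (by fun_prop)]
  simp_rw [Pi.mul_apply, hpdf]
  rw [lintegral_const_mul _ (measurable_gammaPDF a (r + x)), lintegral_gammaPDF_eq_one ha hx,
    mul_one]

lemma measure_lt_eq_lintegral_exp_neg_of_indepFun {Ω : Type*} {mΩ : MeasurableSpace Ω}
    {P : Measure Ω} [IsProbabilityMeasure P] {T E : Ω → ℝ} (hT : Measurable T)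
    (hE : Measurable E) (hTE : IndepFun T E P) (hlawE : P.map E = expMeasure 1)
    (hT0 : ∀ᵐ ω ∂P, 0 ≤ T ω) :
    P {ω | T ω < E ω} = ∫⁻ ω, ENNReal.ofReal (exp (-T ω)) ∂P := by
  have hset : MeasurableSet {p : ℝ × ℝ | p.1 < p.2} :=
    measurableSet_lt measurable_fst measurable_snd
  have hlaw : P.map (fun ω ↦ (T ω, E ω)) = (P.map T).prod (expMeasure 1) := by
    rw [← hlawE]
    exact (indepFun_iff_map_prod_eq_prod_map_map hT.aemeasurable hE.aemeasurable).1 hTE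
  have := isProbabilityMeasure_expMeasure zero_lt_one
  calc P {ω | T ω < E ω} = (P.map fun ω ↦ (T ω, E ω)) {p | p.1 < p.2} := by
        rw [Measure.map_apply (hT.prodMk hE) hset]; rfl
    _ = ∫⁻ t, expMeasure 1 (Ioi t) ∂P.map T := by rw [hlaw, Measure.prod_apply hset]; rfl
    _ = ∫⁻ ω, expMeasure 1 (Ioi (T ω)) ∂P :=
        lintegral_map (measurable_measure_prodMk_left hset) hT
    _ = ∫⁻ ω, ENNReal.ofReal (exp (-T ω)) ∂P :=
        lintegral_congr_ae (hT0.mono fun ω h ↦ by simp [expMeasure_Ioi zero_lt_one h])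

lemma lintegral_exp_neg_mul_noise_eq_mul {Ω : Type*} {mΩ : MeasurableSpace Ω}
    {P : Measure Ω} {ρ α x : ℝ} {R S : Ω → ℝ} (hR : Measurable R) (hS : Measurable S)
    (hRS : IndepFun R S P) :
    ∫⁻ ω, ENNReal.ofReal (exp (-(x * ((1 + R ω ^ α) / ρ + S ω)))) ∂P
      = ENNReal.ofReal (exp (-x / ρ))
        * (∫⁻ r, ENNReal.ofReal (exp (-(x / ρ * r ^ α))) ∂P.map R)
        * ∫⁻ s, ENNReal.ofReal (exp (-(x * s))) ∂P.map S := by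
  have hsplit : ∀ ω, ENNReal.ofReal (exp (-(x * ((1 + R ω ^ α) / ρ + S ω))))
      = ENNReal.ofReal (exp (-x / ρ)) * (ENNReal.ofReal (exp (-(x / ρ * R ω ^ α)))
          * ENNReal.ofReal (exp (-(x * S ω)))) := fun ω ↦ by
    rw [← ENNReal.ofReal_mul (exp_pos _).le, ← ENNReal.ofReal_mul (exp_pos _).le, ← exp_add,
      ← exp_add]
    congr 2
    ring
  have hRS' : IndepFun (fun ω ↦ ENNReal.ofReal (exp (-(x / ρ * R ω ^ α))))
      (fun ω ↦ ENNReal.ofReal (exp (-(x * S ω)))) P :=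
    (hRS.comp (φ := fun r ↦ ENNReal.ofReal (exp (-(x / ρ * r ^ α))))
      (ψ := fun s ↦ ENNReal.ofReal (exp (-(x * s)))) (by fun_prop) (by fun_prop) :)
  simp_rw [hsplit]
  rw [lintegral_const_mul _ (by fun_prop),
    lintegral_mul_eq_lintegral_mul_lintegral_of_indepFun'' (by fun_prop) (by fun_prop) hRS',
    lintegral_map (by fun_prop) hR, lintegral_map (by fun_prop) hS, mul_assoc]

lemma measureReal_lt_sinr {Ω : Type*} {mΩ : MeasurableSpace Ω} {P : Measure Ω}
    [IsProbabilityMeasure P] {a ρ D α x : ℝ} (ha : 0 < a) (hρ : 0 < ρ) (hD : 0 ≤ D)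
    (hα : 0 < α) (hx : 0 < x) {R E S : Ω → ℝ} (hR : Measurable R) (hE : Measurable E)
    (hS : Measurable S) (hlawR : P.map R = diskRadiusMeasure D)
    (hlawE : P.map E = expMeasure 1) (hlawS : P.map S = gammaMeasure a 1)
    (hRS : IndepFun R S P) (hRSE : IndepFun (fun ω ↦ (R ω, S ω)) E P) :
    P.real {ω | x < E ω / ((1 + R ω ^ α) / ρ + S ω)}
      = exp (-x / ρ) * (x + 1) ^ (-a) * (2 / (α * D ^ 2)) * (ρ / x) ^ (2 / α) *
          ∫ u in 0..x * D ^ α / ρ, u ^ (2 / α - 1) * exp (-u) := by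
  have hR0 : ∀ᵐ ω ∂P, 0 ≤ R ω := ae_of_ae_map hR.aemeasurable
    (hlawR ▸ (ae_mem_Ioc_diskRadiusMeasure D).mono fun r hr ↦ hr.1.le)
  have hS0 : ∀ᵐ ω ∂P, 0 ≤ S ω := ae_of_ae_map hS.aemeasurable
    (hlawS ▸ ae_nonneg_gammaMeasure a 1)
  have hpos : ∀ᵐ ω ∂P, 0 < (1 + R ω ^ α) / ρ + S ω := by
    filter_upwards [hR0, hS0] with ω hRω hSω
    have := rpow_nonneg hRω α
    positivity
  have hae : {ω | x < E ω / ((1 + R ω ^ α) / ρ + S ω)}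
      =ᵐ[P] {ω | x * ((1 + R ω ^ α) / ρ + S ω) < E ω} :=
    Filter.eventuallyEq_set.2 (hpos.mono fun ω hω ↦ lt_div_iff₀ hω)
  have hTE : IndepFun (fun ω ↦ x * ((1 + R ω ^ α) / ρ + S ω)) E P :=
    (hRSE.comp (φ := fun p : ℝ × ℝ ↦ x * ((1 + p.1 ^ α) / ρ + p.2)) (ψ := id)
      (by fun_prop) measurable_id :)
  have hint : 0 ≤ ∫ u in 0..x * D ^ α / ρ, u ^ (2 / α - 1) * exp (-u) :=
    intervalIntegral.integral_nonneg (by positivity) fun u hu ↦ by have := hu.1; positivity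
  rw [measureReal_def, measure_congr hae,
    measure_lt_eq_lintegral_exp_neg_of_indepFun (by fun_prop) hE hTE hlawE
      (hpos.mono fun ω hω ↦ by positivity),
    lintegral_exp_neg_mul_noise_eq_mul hR hS hRS, hlawR, hlawS,
    lintegral_exp_neg_mul_rpow_diskRadiusMeasure (by positivity) hD hα,
    lintegral_exp_neg_mul_gammaMeasure ha one_pos (by positivity),
    ← ENNReal.ofReal_mul (exp_pos _).le, ← ENNReal.ofReal_mul' (by positivity),
    rpow_neg (by positivity), ← inv_rpow (by positivity), inv_div, one_div,
    inv_rpow (by positivity), ← rpow_neg (by positivity), add_comm 1 x,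
    show x / ρ * D ^ α = x * D ^ α / ρ by ring, ENNReal.toReal_ofReal (by positivity)]
  ring

lemma ProbabilityTheory.iIndepFun.curry {Ω ι κ 𝓧 : Type*} {mΩ : MeasurableSpace Ω}
    [MeasurableSpace 𝓧] {P : Measure Ω} {X : ι × κ → Ω → 𝓧} (mX : ∀ p, Measurable (X p))
    (h : iIndepFun X P) :
    iIndepFun (fun i ω j ↦ X (i, j) ω) P := by
  have := h.isProbabilityMeasure
  have : ∀ p, IsProbabilityMeasure (P.map (X p)) :=
    fun p ↦ Measure.isProbabilityMeasure_map (mX p).aemeasurable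
  have hblock : ∀ i, P.map (fun ω j ↦ X (i, j) ω)
      = Measure.infinitePi fun j ↦ P.map (X (i, j)) :=
    fun i ↦ (iIndepFun_iff_map_fun_eq_infinitePi_map fun j ↦ mX (i, j)).1
      (h.precomp (Prod.mk_right_injective i))
  rw [iIndepFun_iff_map_fun_eq_infinitePi_map (fun i ↦ by fun_prop)]
  simp_rw [hblock]
  rw [← Measure.infinitePi_map_curry (fun i j ↦ P.map (X (i, j))),
    ← (iIndepFun_iff_map_fun_eq_infinitePi_map mX).1 h,
    Measure.map_map (by fun_prop) (by fun_prop)]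
  rfl

lemma measure_mem_of_indepFun_eq_tsum {Ω β : Type*} {mΩ : MeasurableSpace Ω}
    [MeasurableSpace β] {P : Measure Ω} {N : Ω → ℕ} {Y : Ω → β} (hN : Measurable N)
    (hY : Measurable Y) (hNY : IndepFun N Y P) {C : ℕ → Set β}
    (hC : ∀ n, MeasurableSet (C n)) :
    P {ω | Y ω ∈ C (N ω)} = ∑' n, P (N ⁻¹' {n}) * P (Y ⁻¹' C n) := by
  have hunion : {ω | Y ω ∈ C (N ω)} = ⋃ n, N ⁻¹' {n} ∩ Y ⁻¹' C n := by
    ext ω; simp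
  have hdisj : Pairwise (Function.onFun Disjoint fun n ↦ N ⁻¹' {n} ∩ Y ⁻¹' C n) :=
    fun m n hmn ↦ Set.disjoint_left.2 fun ω h₁ h₂ ↦ hmn (h₁.1.symm.trans h₂.1)
  rw [hunion, measure_iUnion hdisj fun n ↦ (hN (measurableSet_singleton n)).inter (hY (hC n))]
  exact tsum_congr fun n ↦
    hNY.measure_inter_preimage_eq_mul _ _ (measurableSet_singleton n) (hC n)

lemma tsum_poissonMeasure_singleton_mul_pow (r : NNReal) {p : ℝ} (hp : 0 ≤ p) :
    ∑' n, poissonMeasure r {n} * ENNReal.ofReal p ^ n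
      = ENNReal.ofReal (exp (-(r * (1 - p)))) := by
  have hsum : HasSum (fun n : ℕ ↦ exp (-r) * r ^ n / n.factorial * p ^ n)
      (exp (-(r * (1 - p)))) := by
    have h := (NormedSpace.expSeries_div_hasSum_exp ((r : ℝ) * p)).mul_left (exp (-r))
    rw [← Real.exp_eq_exp_ℝ, ← Real.exp_add] at h
    have hterm : (fun n : ℕ ↦ exp (-r) * r ^ n / n.factorial * p ^ n)
        = fun n ↦ exp (-r) * ((r * p) ^ n / n.factorial) := by
      ext n; rw [mul_pow]; ring
    rwa [hterm, show -((r : ℝ) * (1 - p)) = -r + r * p by ring]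
  have hterm : ∀ n : ℕ, poissonMeasure r {n} * ENNReal.ofReal p ^ n
      = ENNReal.ofReal (exp (-r) * r ^ n / n.factorial * p ^ n) := fun n ↦ by
    rw [poissonMeasure_singleton, ← ENNReal.ofReal_pow hp, ENNReal.ofReal_mul (by positivity)]
  simp_rw [hterm]
  rw [← ENNReal.ofReal_tsum_of_nonneg (fun n ↦ by positivity) hsum.summable, hsum.tsum_eq]

lemma measure_forall_lt_eq_exp_of_poisson {Ω β : Type*} {mΩ : MeasurableSpace Ω}
    [MeasurableSpace β] {P : Measure Ω} {N : Ω → ℕ} {V : ℕ → Ω → β} {r : NNReal}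
    {B : Set β} {q : ℝ} (hN : Measurable N) (hV : ∀ i, Measurable (V i))
    (hlawN : P.map N = poissonMeasure r) (hVind : iIndepFun V P)
    (hNV : IndepFun N (fun ω i ↦ V i ω) P) (hB : MeasurableSet B)
    (hVB : ∀ i, P.real (V i ⁻¹' Bᶜ) = q) :
    P {ω | ∀ i < N ω, V i ω ∈ B} = ENNReal.ofReal (exp (-(r * q))) := by
  have := hVind.isProbabilityMeasure
  have hgood : ∀ i, P (V i ⁻¹' B) = ENNReal.ofReal (1 - q) := fun i ↦ by
    rw [← hVB i, preimage_compl, probReal_compl_eq_one_sub (hV i hB), sub_sub_cancel,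
      ofReal_measureReal]
  have hC : ∀ n, MeasurableSet {v : ℕ → β | ∀ i < n, v i ∈ B} := fun n ↦ by
    simp_rw [ofPred_forall]
    exact .iInter fun i ↦ .iInter fun _ ↦ measurable_pi_apply i hB
  have hfirst : ∀ n, P ((fun ω i ↦ V i ω) ⁻¹' {v | ∀ i < n, v i ∈ B})
      = ENNReal.ofReal (1 - q) ^ n := by
    intro n
    have hset : (fun ω i ↦ V i ω) ⁻¹' {v | ∀ i < n, v i ∈ B}
        = ⋂ i ∈ Finset.range n, V i ⁻¹' B := by
      ext ω; simp
    rw [hset, hVind.meas_biInter fun i _ ↦ ⟨B, hB, rfl⟩,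
      Finset.prod_congr rfl fun i _ ↦ hgood i, Finset.prod_const, Finset.card_range]
  have hcount : ∀ n, P (N ⁻¹' {n}) = poissonMeasure r {n} := fun n ↦ by
    rw [← hlawN, Measure.map_apply hN (measurableSet_singleton n)]
  calc P {ω | ∀ i < N ω, V i ω ∈ B}
      = ∑' n, P (N ⁻¹' {n}) * P ((fun ω i ↦ V i ω) ⁻¹' {v | ∀ i < n, v i ∈ B}) :=
        measure_mem_of_indepFun_eq_tsum hN (measurable_pi_lambda _ hV) hNV hC
    _ = ∑' n, poissonMeasure r {n} * ENNReal.ofReal (1 - q) ^ n := by simp_rw [hcount, hfirst]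
    _ = ENNReal.ofReal (exp (-(r * q))) := by
        rw [tsum_poissonMeasure_singleton_mul_pow r
          (sub_nonneg.2 (hVB 0 ▸ measureReal_le_one)), sub_sub_cancel]

/-- Lemma 2 (beam outage probability, bounded path loss `G(d) = (1+d^α)⁻¹`). With a Poisson
number `N` of users (mean `λπD²`), i.i.d. distances `R i` with CDF `(r/D)²` on `[0,D]`,
i.i.d. `Exp(1)` signal powers and i.i.d. `Gamma(M-1,1)` interference powers, all mutually
independent and independent of `N`, the probability that all beam SINRs
`E i / ((1 + R i^α) / ρ + S i)` are at most `x` equals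
`exp(-(2λπ/α) e^{-x/ρ} (x+1)^{1-M} (ρ/x)^{2/α} γ_inc(2/α, x D^α / ρ))`. -/
theorem beam_outage_probability_bounded
    {Ω : Type*} [MeasurableSpace Ω] (P : Measure Ω) [IsProbabilityMeasure P]
    (M : ℕ) (hM : 2 ≤ M) (lam ρ D α : ℝ) (hlam : 0 < lam) (hρ : 0 < ρ) (hD : 0 < D)
    (hα : 2 < α)
    (N : Ω → ℕ) (hNm : Measurable N)
    (hN : P.map N = poissonMeasure ((lam * π * D ^ 2).toNNReal))
    (R E S : ℕ → Ω → ℝ)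
    (hRm : ∀ i, Measurable (R i)) (hEm : ∀ i, Measurable (E i)) (hSm : ∀ i, Measurable (S i))
    (hR : ∀ i, ∀ r ∈ Set.Icc (0 : ℝ) D, (P {ω | R i ω ≤ r}).toReal = (r / D) ^ 2)
    (hE : ∀ i, P.map (E i) = expMeasure 1)
    (hS : ∀ i, P.map (S i) = gammaMeasure ((M : ℝ) - 1) 1)
    (hiid : iIndepFun
        (fun (p : ℕ × Fin 3) => ![R p.1, E p.1, S p.1] p.2) P)
    (hNind : IndepFun N (fun ω (p : ℕ × Fin 3) => ![R p.1, E p.1, S p.1] p.2 ω) P) :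
    ∀ x : ℝ, 0 < x →
      (P {ω | ∀ i < N ω, E i ω / ((1 + R i ω ^ α) / ρ + S i ω) ≤ x}).toReal
        = Real.exp (-(2 * lam * π / α) * Real.exp (-x / ρ) * (x + 1) ^ ((1 : ℝ) - M) *
            (ρ / x) ^ (2 / α) *
            ∫ u in (0 : ℝ)..(x * D ^ α / ρ), u ^ (2 / α - 1) * Real.exp (-u)) := by
  intro x hx
  have hα0 : 0 < α := by linarith
  have ha : 0 < (M : ℝ) - 1 := sub_pos.2 (Nat.one_lt_cast.2 hM)
  set f : ℕ × Fin 3 → Ω → ℝ := fun p ↦ ![R p.1, E p.1, S p.1] p.2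
  have hf : ∀ p, Measurable (f p) := fun ⟨i, k⟩ ↦ by
    fin_cases k
    exacts [hRm i, hEm i, hSm i]
  set B : Set (Fin 3 → ℝ) := {v | v 1 / ((1 + v 0 ^ α) / ρ + v 2) ≤ x}
  set q := exp (-x / ρ) * (x + 1) ^ (-((M : ℝ) - 1)) * (2 / (α * D ^ 2)) * (ρ / x) ^ (2 / α) *
    ∫ u in 0..x * D ^ α / ρ, u ^ (2 / α - 1) * exp (-u) with hq
  have hbad : ∀ i, P.real ((fun ω j ↦ f (i, j) ω) ⁻¹' Bᶜ) = q :=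
    fun i ↦ by
      convert measureReal_lt_sinr ha hρ hD.le hα0 hx (hRm i) (hEm i) (hSm i)
        (map_eq_diskRadiusMeasure hD (hRm i) (hR i)) (hE i) (hS i)
        (hiid.indepFun (i := (i, 0)) (j := (i, 2)) (by simp))
        (hiid.indepFun_prodMk hf (i, 0) (i, 2) (i, 1) (by simp) (by simp)) using 2
      ext ω
      simp [B, f]
  have hNV : IndepFun N (fun ω i j ↦ f (i, j) ω) P :=
    hNind.comp measurable_id (MeasurableEquiv.curry ℕ (Fin 3) ℝ).measurable
  change (P {ω | ∀ i < N ω, (fun j ↦ f (i, j) ω) ∈ B}).toReal = _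
  rw [measure_forall_lt_eq_exp_of_poisson hNm (fun i ↦ by fun_prop) hN (hiid.curry hf) hNV
      (measurableSet_le (by fun_prop) measurable_const) hbad,
    ENNReal.toReal_ofReal (exp_pos _).le, Real.coe_toNNReal _ (by positivity),
    hq, show (1 : ℝ) - M = -((M : ℝ) - 1) by ring]
  field_simp
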